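/- arXiv:1712.09686 — 2 statements merged into one kernel-verified Lean document; each statement's English description precedes it below -/
import Mathlib

section
/- Common knowledge of a deviator event persists along a play: if a coalition C attains common knowledge of D^i(π) at a history τ, then C attains common knowledge of D^i(π) at every prolongation history τ' of τ (every history extending τ). -/
/-!
Infinite games on finite graphs with imperfect monitoring
(Berwanger–Ramanujam, "Deviator Detection under Imperfect Monitoring").

Since the transition function is deterministic and the initial global state
is fixed, a history `v0 a1 v1 ... a_t v_t` is fully determined by its
sequence of action profiles.  We therefore model histories as lists of
action profiles (oldest first) and plays as functions `ℕ → (∀ i, A i)`.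
-/

/-- A game structure: a set `I` of players, actions `A i`, observations `B i`,
global states `St`, a deterministic transition function and a fixed initial
global state. -/
structure GameStr (I : Type) (A : I → Type) (B : I → Type) (St : Type) where
  trans : St → (∀ i, A i) → St × (∀ i, B i)
  init : St

namespace GameStr

variable {I : Type} {A B : I → Type} {St : Type}

/-- The global state reached after a history. -/
def stateAfter (G : GameStr I A B St) (h : List (∀ i, A i)) : St :=
  h.foldl (fun v a => (G.trans v a).1) G.init

/-- Observation sequence of player `i` along a history played from state `v`. -/
def obsSeqFrom (G : GameStr I A B St) (i : I) : St → List (∀ j, A j) → List (B i)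
  | _, [] => []
  | v, a :: h => (G.trans v a).2 i :: obsSeqFrom G i (G.trans v a).1 h

/-- The observation sequence `β^i` of player `i` along a history. -/
def obsSeq (G : GameStr I A B St) (i : I) (h : List (∀ j, A j)) : List (B i) :=
  G.obsSeqFrom i G.init h

/-- Indistinguishability `~^i`: player `i` receives the same observation
sequence along the two histories. -/
def Indist (G : GameStr I A B St) (i : I) (h h' : List (∀ j, A j)) : Prop :=
  G.obsSeq i h = G.obsSeq i h'

/-- The event `E` is common knowledge among coalition `C` at history `h`:
every history reachable from `h` via a finite chain of relations `~^{i_1},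
..., ~^{i_k}` with `i_1, ..., i_k ∈ C` belongs to `E`. -/
def CommonKnow (G : GameStr I A B St) (C : Set I)
    (E : Set (List (∀ j, A j))) (h : List (∀ j, A j)) : Prop :=
  ∀ h', Relation.ReflTransGen (fun x y => ∃ i ∈ C, G.Indist i x y) h h' → h' ∈ E

/-- The history of length `t` produced by the strategy profile `s`. -/
def outHist (G : GameStr I A B St) (s : ∀ i, List (B i) → A i) :
    ℕ → List (∀ i, A i)
  | 0 => []
  | t + 1 => G.outHist s t ++ [fun i => s i (G.obsSeq i (G.outHist s t))]

/-- The outcome play `out(s)` of the strategy profile `s`. -/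
def outPlay (G : GameStr I A B St) (s : ∀ i, List (B i) → A i) (t : ℕ) :
    ∀ i, A i :=
  fun i => s i (G.obsSeq i (G.outHist s t))

/-- Perfect monitoring of the state: all histories in an information set of a
player end at the same global state. -/
def PerfectMonitoring (G : GameStr I A B St) : Prop :=
  ∀ (i : I) (h h' : List (∀ j, A j)),
    G.obsSeq i h = G.obsSeq i h' → G.stateAfter h = G.stateAfter h'

end GameStr

/-- The history consisting of the first `t` rounds of a play. -/
def prefixOf {α : Type*} (p : ℕ → α) (t : ℕ) : List α := (List.range t).map p

/-- A strategy is finite-state if it is computed by an automaton with finitely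
many memory states reading the observation sequence. -/
def FinState {X Y : Type*} (s : List X → Y) : Prop :=
  ∃ (Q : Type) (_ : Fintype Q) (q0 : Q) (δ : Q → X → Q) (o : Q → Y),
    ∀ l, s l = o (l.foldl δ q0)

/-- `DevEvent π i τ` : the history `τ` disagrees with the play `π` and, at the
first round where they disagree, they differ only in the action of player `i`. -/
def DevEvent {I : Type} {A : I → Type} (π : ℕ → ∀ i, A i) (i : I)
    (τ : List (∀ j, A j)) : Prop :=
  ∃ t, ∃ ht : t < τ.length,
    (∀ s (hs : s < t), τ.get ⟨s, hs.trans ht⟩ = π s) ∧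
    τ.get ⟨t, ht⟩ i ≠ π t i ∧
    ∀ j, j ≠ i → τ.get ⟨t, ht⟩ j = π t j

/-- A deviator-detection strategy profile with respect to the set `W` of plays:
the outcome belongs to `W` and, whenever some player `i` unilaterally deviates
so that the outcome disagrees with `out(s)`, the coalition of all other players
attains common knowledge of `D^i(out(s))` at some history of the deviating play. -/
def IsDevDetection {I : Type} [DecidableEq I] {A B : I → Type} {St : Type}
    (G : GameStr I A B St) (W : Set (ℕ → ∀ i, A i))
    (s : ∀ i, List (B i) → A i) : Prop :=
  G.outPlay s ∈ W ∧
  ∀ (i : I) (r : List (B i) → A i),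
    (∃ t, G.outPlay (Function.update s i r) t ≠ G.outPlay s t) →
    ∃ t, G.CommonKnow {j | j ≠ i} {τ | DevEvent (G.outPlay s) i τ}
        (prefixOf (G.outPlay (Function.update s i r)) t)

namespace GameStr

variable {I : Type} {A B : I → Type} {St : Type} {G : GameStr I A B St}

theorem obsSeqFrom_take (i : I) (v : St) (h : List (∀ j, A j)) (n : ℕ) :
    G.obsSeqFrom i v (h.take n) = (G.obsSeqFrom i v h).take n := by
  induction h generalizing v n with
  | nil => simp [obsSeqFrom]
  | cons a h ih => cases n <;> simp [obsSeqFrom, ih]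

theorem Indist.take {i : I} {h h' : List (∀ j, A j)}
    (hi : G.Indist i h h') (n : ℕ) : G.Indist i (h.take n) (h'.take n) := by
  simp only [Indist, obsSeq, obsSeqFrom_take] at hi ⊢
  rw [hi]

/-- A chain of indistinguishabilities starting at `τ'` truncates to one starting at `τ`, since
the observations of the first `n` rounds depend only on those rounds. -/
theorem CommonKnow.of_isPrefix {C : Set I} {E : Set (List (∀ j, A j))}
    (hE : ∀ σ σ', σ <+: σ' → σ ∈ E → σ' ∈ E) {τ τ' : List (∀ j, A j)} (hpre : τ <+: τ')
    (hck : G.CommonKnow C E τ) : G.CommonKnow C E τ' := by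
  intro σ hchain
  have htrunc : Relation.ReflTransGen (fun x y => ∃ i ∈ C, G.Indist i x y)
      τ (σ.take τ.length) := by
    have hτ : τ'.take τ.length = τ := (List.prefix_iff_eq_take.mp hpre).symm
    have hlift := Relation.ReflTransGen.lift (p := fun x y => ∃ i ∈ C, G.Indist i x y)
      (List.take τ.length) (fun _ _ ⟨i, hi, hxy⟩ => ⟨i, hi, hxy.take _⟩) _ _ hchain
    rwa [Function.onFun, hτ] at hlift
  exact hE _ _ (List.take_prefix _ _) (hck _ htrunc)

end GameStr

theorem DevEvent.of_isPrefix {I : Type} {A : I → Type} {π : ℕ → ∀ i, A i} {i : I}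
    {σ σ' : List (∀ j, A j)} (hp : σ <+: σ') (hd : DevEvent π i σ) : DevEvent π i σ' := by
  obtain ⟨t, ht, hagree, hdev, hothers⟩ := hd
  have hget : ∀ s (hs : s < σ.length),
      σ'.get ⟨s, hs.trans_le hp.length_le⟩ = σ.get ⟨s, hs⟩ := fun s hs => by
    simp [List.get_eq_getElem, hp.getElem hs]
  refine ⟨t, ht.trans_le hp.length_le, fun s hs => ?_, ?_, fun j hj => ?_⟩
  · rw [hget s (hs.trans ht)]; exact hagree s hs
  · rw [hget t ht]; exact hdev
  · rw [hget t ht]; exact hothers j hj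

/-- **Persistence of common knowledge of deviator events.**  If a coalition
`C` attains common knowledge of `D^i(π)` at a history `τ`, then `C` attains
common knowledge of `D^i(π)` at every prolongation history `τ'` of `τ`. -/
theorem commonKnow_devEvent_persists {I : Type} {A B : I → Type} {St : Type}
    (G : GameStr I A B St) (C : Set I) (π : ℕ → ∀ i, A i) (i : I)
    (τ τ' : List (∀ j, A j)) (hpre : τ <+: τ')
    (hck : G.CommonKnow C {σ | DevEvent π i σ} τ) :
    G.CommonKnow C {σ | DevEvent π i σ} τ' :=
  hck.of_isPrefix (fun _ _ => DevEvent.of_isPrefix) hpre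
end

section
/- In the four-player reduction game γ' constructed from a three-player coordination game γ, every deviator-detection strategy profile s with respect to the singleton set W consisting of the initial looping play has the property that the pair (s^1, s^2), interpreted in γ, is a distributed winning coordination strategy for the coalition {1, 2} against player 0 with respect to the reachability set F. -/
/-!
### The four-player reduction game

A three-player coordination game `γ` with players `0, 1, 2` is given by its
transition function `tr`, initial state `v0` and target set `F`; player `0`
is the adversary and the coalition `{1, 2}` seeks to reach `F`.  Strategies
map observation lists to actions; a pair `(s1, s2)` is a distributed winning
coordination strategy if the outcome reaches `F` against every strategy of
player `0`.

The reduction game `γ'` has four players `1, 2, X, Y`, where `X` and `Y` both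
take the role of player `0`.  It starts in a fresh state at which it loops
under the fixed action profile `(a1s, a2s, stay, stay)`; the actions of `1`
and `2` at the fresh state are perfectly observable to all players, and the
deviations of `X` and `Y` generate the same fresh observation (the flag `dev`)
and lead to the initial state of the respective copy `γ_X` or `γ_Y` of `γ`.
The copies evolve identically, except that upon reaching a state in `F` the
observation `sigX`, respectively `sigY`, is sent to all players.
-/

section ThreePlayerGame

variable {A0 A1 A2 B0 B1 B2 St : Type}

/-- Observation sequence of one of the three players (selected by the
projection `pr`) along a history of the three-player game `γ`. -/
def obs3From (tr : St → A0 × A1 × A2 → St × (B0 × B1 × B2)) {β : Type}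
    (pr : B0 × B1 × B2 → β) : St → List (A0 × A1 × A2) → List β
  | _, [] => []
  | v, a :: h => pr (tr v a).2 :: obs3From tr pr (tr v a).1 h

/-- The state of `γ` reached after a history. -/
def st3 (tr : St → A0 × A1 × A2 → St × (B0 × B1 × B2)) (v0 : St)
    (h : List (A0 × A1 × A2)) : St :=
  h.foldl (fun v a => (tr v a).1) v0

/-- The history of length `t` produced in `γ` by the strategies
`(r0, s1, s2)`. -/
def hist3 (tr : St → A0 × A1 × A2 → St × (B0 × B1 × B2)) (v0 : St)
    (r0 : List B0 → A0) (s1 : List B1 → A1) (s2 : List B2 → A2) :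
    ℕ → List (A0 × A1 × A2)
  | 0 => []
  | t + 1 =>
      let h := hist3 tr v0 r0 s1 s2 t
      h ++ [(r0 (obs3From tr Prod.fst v0 h),
             s1 (obs3From tr (fun b => b.2.1) v0 h),
             s2 (obs3From tr (fun b => b.2.2) v0 h))]

/-- `(s1, s2)` is a distributed winning coordination strategy for the
coalition `{1, 2}` in `γ`: against every strategy of player `0`, the outcome
play reaches the target set `F`. -/
def IsDistWinning (tr : St → A0 × A1 × A2 → St × (B0 × B1 × B2)) (v0 : St)
    (F : St → Bool) (s1 : List B1 → A1) (s2 : List B2 → A2) : Prop :=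
  ∀ r0 : List B0 → A0, ∃ t, F (st3 tr v0 (hist3 tr v0 r0 s1 s2 t)) = true

end ThreePlayerGame

/-- The four players of the reduction game `γ'`. -/
inductive P | pl1 | pl2 | plX | plY
  deriving DecidableEq

/-- Observations in `γ'`: at the fresh state everybody observes the actions of
players `1` and `2` together with the flag telling whether `X` or `Y` deviated;
inside the copies, players observe their original observations, and the
signals `sigX` / `sigY` are broadcast when the target set is reached in the
respective copy. -/
inductive Obs (A1 A2 B0 B1 B2 : Type)
  | start (a1 : A1) (a2 : A2) (dev : Bool)
  | ob0 (b : B0)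
  | ob1 (b : B1)
  | ob2 (b : B2)
  | sigX
  | sigY

/-- Global states of `γ'`: the fresh looping state, or a state of the copy
`γ_X` or of the copy `γ_Y`. -/
inductive GSt (St : Type) | fresh | inX (v : St) | inY (v : St)

/-- Actions in `γ'`: players `1`, `2` keep their actions; `X` and `Y` may stay
(`none`, the loop action) or play an action of player `0` (`some a`). -/
def PAct (A0 A1 A2 : Type) : P → Type
  | .pl1 => A1
  | .pl2 => A2
  | .plX => Option A0
  | .plY => Option A0

section Reduction

variable {A0 A1 A2 B0 B1 B2 St : Type} [Inhabited A0]

/-- The transition function of the reduction game `γ'`. -/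
def transRed (tr : St → A0 × A1 × A2 → St × (B0 × B1 × B2)) (v0 : St)
    (F : St → Bool) :
    GSt St → (∀ p, PAct A0 A1 A2 p) → GSt St × (∀ _ : P, Obs A1 A2 B0 B1 B2)
  | .fresh, a =>
      let d : Bool := (a .plX).isSome || (a .plY).isSome
      let v' : GSt St :=
        match a .plX, a .plY with
        | some _, none => .inX v0
        | none, some _ => .inY v0
        | _, _ => .fresh
      (v', fun _ => .start (a .pl1) (a .pl2) d)
  | .inX v, a =>
      let q := tr v ((a .plX).getD default, a .pl1, a .pl2)
      (.inX q.1,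
        if F q.1 then fun _ => .sigX
        else fun p => match p with
          | .pl1 => .ob1 q.2.2.1
          | .pl2 => .ob2 q.2.2.2
          | _ => .ob0 q.2.1)
  | .inY v, a =>
      let q := tr v ((a .plY).getD default, a .pl1, a .pl2)
      (.inY q.1,
        if F q.1 then fun _ => .sigY
        else fun p => match p with
          | .pl1 => .ob1 q.2.2.1
          | .pl2 => .ob2 q.2.2.2
          | _ => .ob0 q.2.1)

/-- The reduction game `γ'`. -/
def redGame (tr : St → A0 × A1 × A2 → St × (B0 × B1 × B2)) (v0 : St)
    (F : St → Bool) :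
    GameStr P (PAct A0 A1 A2) (fun _ => Obs A1 A2 B0 B1 B2) (GSt St) :=
  ⟨transRed tr v0 F, .fresh⟩

/-- The fixed action profile under which `γ'` loops at the fresh state. -/
def loopProf (a1s : A1) (a2s : A2) : ∀ p, PAct A0 A1 A2 p :=
  fun p => match p with
  | .pl1 => a1s
  | .pl2 => a2s
  | .plX => none
  | .plY => none

/-- The designated target set `W` of `γ'`: the singleton consisting of the
initial looping play. -/
def WRed (a1s : A1) (a2s : A2) : Set (ℕ → ∀ p, PAct A0 A1 A2 p) :=
  {π | π = fun _ => loopProf a1s a2s}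

end Reduction

section Stmt9

variable {A0 A1 A2 B0 B1 B2 St : Type} [Inhabited A0]

/-- Player `1`'s strategy in `γ'`, interpreted in `γ` (via the deviation of
`X` at the first round, which is observed as `start a1s a2s true` and leads to
the copy `γ_X`, in which the observations of player `1` are its
`γ`-observations). -/
def interp1 (a1s : A1) (a2s : A2)
    (s : ∀ p, List (Obs A1 A2 B0 B1 B2) → PAct A0 A1 A2 p) :
    List B1 → A1 :=
  fun l => s .pl1 (.start a1s a2s true :: l.map Obs.ob1)

/-- Player `2`'s strategy in `γ'`, interpreted in `γ`. -/
def interp2 (a1s : A1) (a2s : A2)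
    (s : ∀ p, List (Obs A1 A2 B0 B1 B2) → PAct A0 A1 A2 p) :
    List B2 → A2 :=
  fun l => s .pl2 (.start a1s a2s true :: l.map Obs.ob2)


end Stmt9

/-!
Suppose `(s¹, s²)` is not winning, so some `r0` keeps `γ` out of `F` forever. Let `X` leave the
loop at once and then play `r0` inside `γ_X` on its player-`0` observations. This play disagrees
with the loop, so some prefix of it makes `D^X` common knowledge among `1`, `2`, `Y`. Since `F` is
never reached, no `sigX` is sent and the prefix projects onto the `γ`-history of `(r0, s¹, s²)`;
hence player `1` confuses it with the mirror history in which `Y` leaves the loop and the same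
`γ`-history is played inside `γ_Y`. There the first deviation from the loop is by `Y`, so `D^X`
fails.
-/

theorem GameStr.prefixOf_outPlay {I : Type} {A B : I → Type} {S : Type}
    (G : GameStr I A B S) (s : ∀ i, List (B i) → A i) (t : ℕ) :
    prefixOf (G.outPlay s) t = G.outHist s t := by
  induction t with
  | zero => rfl
  | succ t ih =>
    rw [prefixOf, List.range_succ, List.map_append, ← prefixOf, ih]
    rfl

theorem not_devEvent_nil {I : Type} {A : I → Type} (π : ℕ → ∀ i, A i) (i : I) :
    ¬ DevEvent π i [] :=
  fun ⟨_, ht, _⟩ => Nat.not_lt_zero _ ht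

theorem not_devEvent_cons {I : Type} {A : I → Type} {π : ℕ → ∀ i, A i} {i j : I}
    {a : ∀ i, A i} (h : List (∀ i, A i)) (hj : a j ≠ π 0 j) (hji : j ≠ i) :
    ¬ DevEvent π i (a :: h) := by
  rintro ⟨_ | t, ht, hbefore, -, hothers⟩
  · exact hj (hothers j hji)
  · exact hj (congrFun (hbefore 0 t.succ_pos) j)

section ThreePlayerGame

variable {A0 A1 A2 B0 B1 B2 St : Type} (tr : St → A0 × A1 × A2 → St × (B0 × B1 × B2))

theorem obs3From_comp {β γ : Type} (pr : B0 × B1 × B2 → β) (f : β → γ) (v : St)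
    (h : List (A0 × A1 × A2)) :
    obs3From tr (f ∘ pr) v h = (obs3From tr pr v h).map f := by
  induction h generalizing v with
  | nil => rfl
  | cons a h ih => simp only [obs3From, ih, Function.comp_apply, List.map_cons]

variable (F : St → Bool)

def Avoids : St → List (A0 × A1 × A2) → Prop
  | _, [] => True
  | v, a :: h => F (tr v a).1 = false ∧ Avoids (tr v a).1 h

theorem Avoids.append_singleton {v : St} {h : List (A0 × A1 × A2)} {a : A0 × A1 × A2}
    (hh : Avoids tr F v h) (ha : F (tr (st3 tr v h) a).1 = false) :
    Avoids tr F v (h ++ [a]) := by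
  induction h generalizing v with
  | nil => exact ⟨ha, trivial⟩
  | cons b h ih => exact ⟨hh.1, ih hh.2 ha⟩

theorem avoids_hist3 (v0 : St) (r0 : List B0 → A0) (s1 : List B1 → A1) (s2 : List B2 → A2)
    (hF : ∀ t, F (st3 tr v0 (hist3 tr v0 r0 s1 s2 t)) = false) (n : ℕ) :
    Avoids tr F v0 (hist3 tr v0 r0 s1 s2 n) := by
  induction n with
  | zero => trivial
  | succ n ih =>
    refine ih.append_singleton tr F ?_
    simpa only [hist3, st3, List.foldl_append, List.foldl_cons, List.foldl_nil] using hF (n + 1)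

end ThreePlayerGame

section Interpretation

variable {A0 A1 A2 B0 B1 B2 St : Type} (tr : St → A0 × A1 × A2 → St × (B0 × B1 × B2))
  (a1s : A1) (a2s : A2)

/-- Inside either copy, `X` and `Y` both observe what player `0` observes in `γ`. -/
def copyObs : P → B0 × B1 × B2 → Obs A1 A2 B0 B1 B2
  | .pl1, b => .ob1 b.2.1
  | .pl2, b => .ob2 b.2.2
  | _, b => .ob0 b.1

/-- Inside `γ_X`, the `ob0` entries of `X`'s observations are player `0`'s observations in `γ`. -/
def xDeviation (r0 : List B0 → A0) (l : List (Obs A1 A2 B0 B1 B2)) : Option A0 :=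
  some (r0 (l.filterMap fun | .ob0 b => some b | _ => none))

theorem xDeviation_start_cons (r0 : List B0 → A0) (d : Bool) (v : St)
    (h : List (A0 × A1 × A2)) :
    xDeviation r0 (.start a1s a2s d :: obs3From tr (copyObs .plX) v h) =
      some (r0 (obs3From tr Prod.fst v h)) := by
  rw [show copyObs .plX = Obs.ob0 ∘ Prod.fst from rfl, obs3From_comp]
  simp [xDeviation, List.filterMap_map]

variable (s : ∀ p, List (Obs A1 A2 B0 B1 B2) → PAct A0 A1 A2 p)

theorem interp1_obs3From (v : St) (h : List (A0 × A1 × A2)) :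
    interp1 a1s a2s s (obs3From tr (fun b => b.2.1) v h) =
      s .pl1 (.start a1s a2s true :: obs3From tr (copyObs .pl1) v h) := by
  rw [interp1, ← obs3From_comp]
  rfl

theorem interp2_obs3From (v : St) (h : List (A0 × A1 × A2)) :
    interp2 a1s a2s s (obs3From tr (fun b => b.2.2) v h) =
      s .pl2 (.start a1s a2s true :: obs3From tr (copyObs .pl2) v h) := by
  rw [interp2, ← obs3From_comp]
  rfl

end Interpretation

section Reduction

variable {A0 A1 A2 B0 B1 B2 St : Type} [Inhabited A0]
  (tr : St → A0 × A1 × A2 → St × (B0 × B1 × B2)) (v0 : St) (F : St → Bool)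

def projX (a : ∀ p, PAct A0 A1 A2 p) : A0 × A1 × A2 :=
  ((a .plX).getD default, a .pl1, a .pl2)

def embY (c : A0 × A1 × A2) : ∀ p, PAct A0 A1 A2 p
  | .pl1 => c.2.1
  | .pl2 => c.2.2
  | .plX => none
  | .plY => some c.1

theorem redGame_trans_inX {v : St} {a : ∀ p, PAct A0 A1 A2 p}
    (ha : F (tr v (projX a)).1 = false) :
    (redGame tr v0 F).trans (.inX v) a =
      (.inX (tr v (projX a)).1, fun p => copyObs p (tr v (projX a)).2) := by
  simp only [redGame, transRed, projX] at ha ⊢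
  rw [if_neg (ne_true_of_eq_false ha)]
  congr
  funext p
  cases p <;> rfl

theorem redGame_trans_inY_embY {v : St} {c : A0 × A1 × A2} (hc : F (tr v c).1 = false) :
    (redGame tr v0 F).trans (.inY v) (embY c) =
      (.inY (tr v c).1, fun p => copyObs p (tr v c).2) := by
  simp only [redGame, transRed, embY, Option.getD_some, Prod.mk.eta]
  rw [if_neg (ne_true_of_eq_false hc)]
  congr
  funext p
  cases p <;> rfl

theorem obsSeqFrom_inX (p : P) (h : List (∀ p, PAct A0 A1 A2 p)) (v : St)
    (hh : Avoids tr F v (h.map projX)) :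
    (redGame tr v0 F).obsSeqFrom p (.inX v) h = obs3From tr (copyObs p) v (h.map projX) := by
  induction h generalizing v with
  | nil => rfl
  | cons a h ih =>
    simp only [GameStr.obsSeqFrom, redGame_trans_inX tr v0 F hh.1, List.map_cons, obs3From,
      ih _ hh.2]

theorem obsSeqFrom_inY (p : P) (h : List (A0 × A1 × A2)) (v : St) (hh : Avoids tr F v h) :
    (redGame tr v0 F).obsSeqFrom p (.inY v) (h.map embY) = obs3From tr (copyObs p) v h := by
  induction h generalizing v with
  | nil => rfl
  | cons c h ih =>
    simp only [List.map_cons, GameStr.obsSeqFrom, redGame_trans_inY_embY tr v0 F hh.1,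
      obs3From, ih _ hh.2]

variable (a1s : A1) (a2s : A2)

theorem obsSeq_xDeviation (x : A0) (h : List (∀ p, PAct A0 A1 A2 p))
    (hh : Avoids tr F v0 (h.map projX)) (p : P) :
    (redGame tr v0 F).obsSeq p (Function.update (loopProf a1s a2s) .plX (some x) :: h) =
      .start a1s a2s true :: obs3From tr (copyObs p) v0 (h.map projX) :=
  congrArg (List.cons _) (obsSeqFrom_inX tr v0 F p h v0 hh)

theorem obsSeq_yDeviation (x : A0) (h : List (A0 × A1 × A2)) (hh : Avoids tr F v0 h) (p : P) :
    (redGame tr v0 F).obsSeq p (Function.update (loopProf a1s a2s) .plY (some x) :: h.map embY) =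
      .start a1s a2s true :: obs3From tr (copyObs p) v0 h :=
  congrArg (List.cons _) (obsSeqFrom_inY tr v0 F p h v0 hh)

theorem indist_xDeviation_yDeviation (x : A0) (h : List (∀ p, PAct A0 A1 A2 p))
    (hh : Avoids tr F v0 (h.map projX)) :
    (redGame tr v0 F).Indist .pl1 (Function.update (loopProf a1s a2s) .plX (some x) :: h)
      (Function.update (loopProf a1s a2s) .plY (some x) :: (h.map projX).map embY) := by
  rw [GameStr.Indist, obsSeq_xDeviation, obsSeq_yDeviation] <;> exact hh

variable (s : ∀ p, List (Obs A1 A2 B0 B1 B2) → PAct A0 A1 A2 p)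

theorem projX_xDeviation_step (r0 : List B0 → A0) (x : A0) (T : List (∀ p, PAct A0 A1 A2 p))
    (hT : Avoids tr F v0 (T.map projX)) :
    projX (fun p => Function.update s .plX (xDeviation r0) p
        ((redGame tr v0 F).obsSeq p (Function.update (loopProf a1s a2s) .plX (some x) :: T))) =
      (r0 (obs3From tr Prod.fst v0 (T.map projX)),
        interp1 a1s a2s s (obs3From tr (fun b => b.2.1) v0 (T.map projX)),
        interp2 a1s a2s s (obs3From tr (fun b => b.2.2) v0 (T.map projX))) := by
  simp only [projX, obsSeq_xDeviation tr v0 F a1s a2s x T hT]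
  show ((xDeviation r0 _).getD default, s .pl1 _, s .pl2 _) = _
  rw [xDeviation_start_cons, interp1_obs3From, interp2_obs3From]
  rfl

theorem outHist_xDeviation (r0 : List B0 → A0) (hloop0 : (fun p => s p []) = loopProf a1s a2s)
    (hh : ∀ n, Avoids tr F v0 (hist3 tr v0 r0 (interp1 a1s a2s s) (interp2 a1s a2s s) n))
    (n : ℕ) :
    ∃ T, (redGame tr v0 F).outHist (Function.update s .plX (xDeviation r0)) (n + 1) =
        Function.update (loopProf a1s a2s) .plX (some (r0 [])) :: T ∧
      T.map projX = hist3 tr v0 r0 (interp1 a1s a2s s) (interp2 a1s a2s s) n := by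
  induction n with
  | zero =>
    refine ⟨[], ?_, rfl⟩
    have hfirst : (fun p => Function.update s .plX (xDeviation r0) p []) =
        Function.update (fun p => s p []) .plX (xDeviation r0 []) :=
      funext (Function.apply_update (fun _ f => f []) s .plX (xDeviation r0))
    rw [hloop0] at hfirst
    exact congrArg (· :: []) hfirst
  | succ n ih =>
    obtain ⟨T, hT, hTproj⟩ := ih
    refine ⟨T ++ [_], by rw [GameStr.outHist, hT]; rfl, ?_⟩
    rw [List.map_append, List.map_singleton, hTproj, hist3,
      projX_xDeviation_step tr v0 F a1s a2s s r0 _ T (hTproj ▸ hh n), hTproj]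

end Reduction

section Stmt9

variable {A0 A1 A2 B0 B1 B2 St : Type} [Inhabited A0]

/-- **From deviator detection in `γ'` to distributed coordination in `γ`.**
Every deviator-detection strategy profile `s` in the reduction game `γ'` with
respect to the singleton target set `W` consisting of the initial looping play
yields, via the interpretation of `(s^1, s^2)` in `γ`, a distributed winning
coordination strategy for the coalition `{1, 2}` against player `0` with
respect to the reachability set `F`. -/
theorem detection_in_reduction_gives_coordination
    (tr : St → A0 × A1 × A2 → St × (B0 × B1 × B2)) (v0 : St) (F : St → Bool)
    (a1s : A1) (a2s : A2)
    (s : ∀ p, List (Obs A1 A2 B0 B1 B2) → PAct A0 A1 A2 p)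
    (hs : IsDevDetection (redGame tr v0 F) (WRed a1s a2s) s) :
    IsDistWinning tr v0 F (interp1 a1s a2s s) (interp2 a1s a2s s) := by
  obtain ⟨hloop : (redGame tr v0 F).outPlay s = fun _ => loopProf a1s a2s, hdetect⟩ := hs
  have hloop0 : (fun p => s p []) = loopProf a1s a2s := congrFun hloop 0
  intro r0
  by_contra hlose
  push Not at hlose
  have havoid := avoids_hist3 tr F v0 r0 _ _ (fun t => Bool.eq_false_iff.mpr (hlose t))
  have hdeviates : (redGame tr v0 F).outPlay (Function.update s .plX (xDeviation r0)) 0 .plX ≠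
      (redGame tr v0 F).outPlay s 0 .plX :=
    fun h => Option.some_ne_none (r0 []) (h.trans (congrFun hloop0 .plX))
  obtain ⟨t, hCK⟩ := hdetect .plX (xDeviation r0) ⟨0, fun h => hdeviates (congrFun h _)⟩
  rw [GameStr.prefixOf_outPlay] at hCK
  cases t with
  | zero => exact not_devEvent_nil _ _ (hCK [] .refl)
  | succ n =>
    obtain ⟨T, hT, hTproj⟩ := outHist_xDeviation tr v0 F a1s a2s s r0 hloop0 havoid n
    have hmirror := indist_xDeviation_yDeviation tr v0 F a1s a2s (r0 []) T (hTproj ▸ havoid n)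
    rw [← hT] at hmirror
    have hD : DevEvent _ P.plX _ := hCK _ (.single ⟨.pl1, by decide, hmirror⟩)
    rw [hloop] at hD
    exact not_devEvent_cons (j := .plY) _ (Option.some_ne_none (r0 [])) (by decide) hD

end Stmt9
end
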